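/- Consider θ ∈ [0,1], x ∈ [0,1], loss ℓ(θ; x, y) = -(θx - y)², and label distribution y ~ Bernoulli(θ²). Define PR(θ; x) := θ²·ℓ(θ;x,1) + (1-θ²)·ℓ(θ;x,0) = -θ²(θx - 1)² - (1-θ²)(θx)². With the reparameterization φ = θ² (so θ = √φ), define PR†(φ; x) := -φ(√φ·x - 1)² - (1-φ)·φ·x². Then PR†(·; x) is convex in φ on [0,1] for every x ∈ [0,1]. -/
import Mathlib

lemma linear_convexOn' (c : ℝ) : ConvexOn ℝ (Set.Icc (0:ℝ) 1) (fun φ : ℝ => c * φ) := by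
  refine ⟨convex_Icc 0 1, fun p _ q _ a b _ _ _ => le_of_eq ?_⟩
  simp [smul_eq_mul]
  ring

theorem PRdagger_convex_in_phi :
    ∀ x ∈ Set.Icc (0 : ℝ) 1,
      ConvexOn ℝ (Set.Icc (0 : ℝ) 1)
        (fun φ : ℝ => -(φ * (Real.sqrt φ * x - 1) ^ 2) - (1 - φ) * φ * x ^ 2) := by
  intro x hx
  have hrp : ConvexOn ℝ (Set.Icc (0:ℝ) 1) (fun φ : ℝ => φ ^ ((3:ℝ)/2)) :=
    (convexOn_rpow (by norm_num : (1:ℝ) ≤ 3/2)).subset Set.Icc_subset_Ici_self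
      (convex_Icc 0 1)
  have h2x : (0:ℝ) ≤ 2 * x := by nlinarith [hx.1]
  have h2 : ConvexOn ℝ (Set.Icc (0:ℝ) 1)
      (fun φ : ℝ => (2*x) • φ ^ ((3:ℝ)/2) + (-(1 + x^2)) * φ) :=
    (hrp.smul h2x).add (linear_convexOn' _)
  refine h2.congr fun φ hφ => ?_
  have h0 : (0:ℝ) ≤ φ := hφ.1
  have hsq : Real.sqrt φ ^ 2 = φ := Real.sq_sqrt h0
  have hr : φ ^ ((3:ℝ)/2) = φ * Real.sqrt φ := by
    rw [show (3:ℝ)/2 = 1 + 1/2 by norm_num, Real.rpow_add' h0 (by norm_num),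
      Real.rpow_one, ← Real.sqrt_eq_rpow]
  simp only [smul_eq_mul, hr]
  linear_combination φ * x^2 * hsq
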